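/- Let q, p : ℝ → ℝ³ be smooth curves with p(t) · q(t) = 1 and p'(t) = q(t) × q'(t) for all t, and suppose I := det(q, q', q'') and Ī := det(p, p', p'') are nowhere zero. Setting J := det(q', q'', q'''), J̄ := det(p', p'', p'''), K := det(q, q'', q''') and K̄ := det(p, p'', p'''), one has Ī = I, J̄ = −J, and K̄ = K identically. -/

import Mathlib

open Matrix

/-- Scalar triple product on ℝ³. -/
def det3 (u v w : Fin 3 → ℝ) : ℝ := u ⬝ᵥ (v ⨯₃ w)

/-!
Differentiating `p ⬝ᵥ q = 1` three times along `p' = q × q'` gives `p ⬝ᵥ q' = p ⬝ᵥ q'' = 0` and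
`p ⬝ᵥ q''' = -I`, while `p'' = q × q''` and `p''' = q' × q'' + q × q'''`. Hence `Ī`, `J̄`, `K̄` are
triple products of cross products, which the expansion
`(x × y) × (z × w) = det(x, y, w) z - det(x, y, z) w` evaluates to `I`, `I²` and `K`.
Pairing `p` with the linear relation among the four vectors `q, q', q'', q'''` of ℝ³ finally
shows `J = -I²`.
-/

section Calculus

variable {𝕜 : Type*} [NontriviallyNormedField 𝕜] {t : 𝕜}

theorem HasDerivAt.dotProduct {ι : Type*} [Fintype ι] {f g : 𝕜 → ι → 𝕜} {f' g' : ι → 𝕜}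
    (hf : HasDerivAt f f' t) (hg : HasDerivAt g g' t) :
    HasDerivAt (fun s => f s ⬝ᵥ g s) (f' ⬝ᵥ g t + f t ⬝ᵥ g') t := by
  rw [hasDerivAt_pi] at hf hg
  have h := HasDerivAt.fun_sum (u := Finset.univ) fun i _ => (hf i).mul (hg i)
  rw [Finset.sum_add_distrib] at h
  exact h

theorem HasDerivAt.cross {f g : 𝕜 → Fin 3 → 𝕜} {f' g' : Fin 3 → 𝕜}
    (hf : HasDerivAt f f' t) (hg : HasDerivAt g g' t) :
    HasDerivAt (fun s => f s ⨯₃ g s) (f' ⨯₃ g t + f t ⨯₃ g') t := by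
  rw [hasDerivAt_pi] at hf hg ⊢
  intro i
  fin_cases i <;>
    simp only [cross_apply, Fin.isValue, Fin.zero_eta, Fin.mk_one, Fin.reduceFinMk, Pi.add_apply,
      cons_val_zero, cons_val_one, cons_val] <;>
    [exact (((hf 1).mul (hg 2)).sub ((hf 2).mul (hg 1))).congr_deriv (by ring);
     exact (((hf 2).mul (hg 0)).sub ((hf 0).mul (hg 2))).congr_deriv (by ring);
     exact (((hf 0).mul (hg 1)).sub ((hf 1).mul (hg 0))).congr_deriv (by ring)]

theorem HasDerivAt.dotProduct_add_dotProduct_eq_zero {ι : Type*} [Fintype ι]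
    {f g : 𝕜 → ι → 𝕜} {f' g' : ι → 𝕜} {c : 𝕜}
    (hf : HasDerivAt f f' t) (hg : HasDerivAt g g' t) (hc : ∀ s, f s ⬝ᵥ g s = c) :
    f' ⬝ᵥ g t + f t ⬝ᵥ g' = 0 :=
  (hf.dotProduct hg).unique (by simpa only [hc] using hasDerivAt_const t c)

theorem ContDiff.hasDerivAt_iterate_deriv {F : Type*} [NormedAddCommGroup F] [NormedSpace 𝕜 F]
    {f : 𝕜 → F} {n k : ℕ} (hf : ContDiff 𝕜 n f) (hk : k < n) (t : 𝕜) :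
    HasDerivAt (deriv^[k] f) (deriv^[k + 1] f t) t := by
  have h : ContDiff 𝕜 (1 + k : ℕ) f := hf.of_le (by exact_mod_cast (by omega : 1 + k ≤ n))
  rw [Function.iterate_succ_apply']
  exact ((h.iterate_deriv' 1 k).differentiable one_ne_zero t).hasDerivAt

end Calculus

section TripleProduct

theorem cross_cross_cross {R : Type*} [CommRing R] (x y z w : Fin 3 → R) :
    (x ⨯₃ y) ⨯₃ (z ⨯₃ w) = (x ⬝ᵥ y ⨯₃ w) • z - (x ⬝ᵥ y ⨯₃ z) • w := by
  rw [cross_cross_eq_smul_sub_smul', dotProduct_comm z, dotProduct_comm _ w,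
    dotProduct_comm _ z, triple_product_permutation w, triple_product_permutation z]

theorem det3_smul_alternating_sum_eq_zero (a b c d : Fin 3 → ℝ) :
    det3 b c d • a - det3 a c d • b + det3 a b d • c - det3 a b c • d = 0 := by
  ext i
  fin_cases i <;>
    simp only [det3, dotProduct, cross_apply, Fin.isValue, Fin.sum_univ_three, cons_val_zero,
      cons_val_one, cons_val_two, tail_cons, head_cons, Fin.zero_eta, Fin.mk_one, Fin.reduceFinMk,
      Pi.sub_apply, Pi.add_apply, Pi.smul_apply, smul_eq_mul, Pi.ofNat_apply] <;> ring

theorem det3_cross_cross_add_cross (a b c d : Fin 3 → ℝ) :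
    det3 (a ⨯₃ b) (a ⨯₃ c) (b ⨯₃ c + a ⨯₃ d) = det3 a b c ^ 2 := by
  simp only [det3, map_add, cross_cross_cross, cross_self, dot_cross_self, dotProduct_zero,
    zero_smul, zero_sub, sub_zero, dotProduct_add, dotProduct_neg, dotProduct_smul, smul_eq_mul]
  rw [dotProduct_comm _ a, dot_self_cross, dotProduct_comm _ c, triple_product_permutation c,
    ← cross_anticomm b c, dotProduct_neg]
  ring

variable {P a b c d : Fin 3 → ℝ}

theorem det3_eq_neg_det3_sq (ha : P ⬝ᵥ a = 1) (hb : P ⬝ᵥ b = 0) (hc : P ⬝ᵥ c = 0)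
    (hd : P ⬝ᵥ d = -det3 a b c) : det3 b c d = -det3 a b c ^ 2 := by
  have h := congrArg (P ⬝ᵥ ·) (det3_smul_alternating_sum_eq_zero a b c d)
  simp only [dotProduct_add, dotProduct_sub, dotProduct_smul, smul_eq_mul, ha, hb, hc, hd,
    dotProduct_zero] at h
  linear_combination h

theorem det3_cross_cross (ha : P ⬝ᵥ a = 1) (b c : Fin 3 → ℝ) :
    det3 P (a ⨯₃ b) (a ⨯₃ c) = det3 a b c := by
  simp [det3, cross_cross_cross, dot_cross_self, ha]

theorem det3_cross_add_cross (ha : P ⬝ᵥ a = 1) (hc : P ⬝ᵥ c = 0) (b d : Fin 3 → ℝ) :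
    det3 P (a ⨯₃ c) (b ⨯₃ c + a ⨯₃ d) = det3 a c d := by
  simp [det3, cross_cross_cross, cross_self, dot_cross_self, ha, hc]

end TripleProduct

namespace CartanEngel

variable {q p : ℝ → Fin 3 → ℝ}

theorem hasDerivAt_deriv (hq : ContDiff ℝ 2 q) (hode : ∀ t, deriv p t = q t ⨯₃ deriv q t)
    (t : ℝ) : HasDerivAt (deriv p) (q t ⨯₃ deriv (deriv q) t) t := by
  have hq0 : HasDerivAt q (deriv q t) t := hq.hasDerivAt_iterate_deriv (k := 0) (by norm_num) t
  have hq1 : HasDerivAt (deriv q) (deriv (deriv q) t) t :=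
    hq.hasDerivAt_iterate_deriv (k := 1) (by norm_num) t
  rw [funext hode]
  simpa only [cross_self, zero_add] using hq0.cross hq1

theorem hasDerivAt_deriv_deriv (hq : ContDiff ℝ 3 q) (hode : ∀ t, deriv p t = q t ⨯₃ deriv q t)
    (t : ℝ) : HasDerivAt (deriv (deriv p))
      (deriv q t ⨯₃ deriv (deriv q) t + q t ⨯₃ deriv (deriv (deriv q)) t) t := by
  have hq0 : HasDerivAt q (deriv q t) t := hq.hasDerivAt_iterate_deriv (k := 0) (by norm_num) t
  have hq2 : HasDerivAt (deriv (deriv q)) (deriv (deriv (deriv q)) t) t :=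
    hq.hasDerivAt_iterate_deriv (k := 2) (by norm_num) t
  rw [funext fun s => (hasDerivAt_deriv (hq.of_le (by norm_num)) hode s).deriv]
  exact hq0.cross hq2

theorem dotProduct_deriv_eq_zero (hp : Differentiable ℝ p) (hq : ContDiff ℝ 1 q)
    (hpq : ∀ t, p t ⬝ᵥ q t = 1) (hode : ∀ t, deriv p t = q t ⨯₃ deriv q t) (t : ℝ) :
    p t ⬝ᵥ deriv q t = 0 := by
  have hq0 : HasDerivAt q (deriv q t) t := hq.hasDerivAt_iterate_deriv (k := 0) (by norm_num) t
  have h := (hp t).hasDerivAt.dotProduct_add_dotProduct_eq_zero hq0 hpq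
  rwa [hode, dotProduct_comm, dot_self_cross, zero_add] at h

theorem dotProduct_deriv_deriv_eq_zero (hp : Differentiable ℝ p) (hq : ContDiff ℝ 2 q)
    (hpq : ∀ t, p t ⬝ᵥ q t = 1) (hode : ∀ t, deriv p t = q t ⨯₃ deriv q t) (t : ℝ) :
    p t ⬝ᵥ deriv (deriv q) t = 0 := by
  have hq1 : HasDerivAt (deriv q) (deriv (deriv q) t) t :=
    hq.hasDerivAt_iterate_deriv (k := 1) (by norm_num) t
  have h := (hp t).hasDerivAt.dotProduct_add_dotProduct_eq_zero hq1
    (dotProduct_deriv_eq_zero hp (hq.of_le (by norm_num)) hpq hode)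
  rwa [hode, dotProduct_comm, dot_cross_self, zero_add] at h

theorem dotProduct_deriv_deriv_deriv (hp : Differentiable ℝ p) (hq : ContDiff ℝ 3 q)
    (hpq : ∀ t, p t ⬝ᵥ q t = 1) (hode : ∀ t, deriv p t = q t ⨯₃ deriv q t) (t : ℝ) :
    p t ⬝ᵥ deriv (deriv (deriv q)) t = -det3 (q t) (deriv q t) (deriv (deriv q) t) := by
  have hq2 : HasDerivAt (deriv (deriv q)) (deriv (deriv (deriv q)) t) t :=
    hq.hasDerivAt_iterate_deriv (k := 2) (by norm_num) t
  have h := (hp t).hasDerivAt.dotProduct_add_dotProduct_eq_zero hq2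
    (dotProduct_deriv_deriv_eq_zero hp (hq.of_le (by norm_num)) hpq hode)
  rw [hode, dotProduct_comm, triple_product_permutation] at h
  rw [det3]
  linear_combination h

end CartanEngel

open CartanEngel

theorem dancing_pair_invariants_general (q p : ℝ → Fin 3 → ℝ)
    (hq : ContDiff ℝ (⊤ : ℕ∞) q) (hp : ContDiff ℝ (⊤ : ℕ∞) p)
    (hpq : ∀ t, p t ⬝ᵥ q t = 1)
    (hode : ∀ t, deriv p t = q t ⨯₃ deriv q t) :
    ∀ t, det3 (p t) (deriv p t) (deriv (deriv p) t)
        = det3 (q t) (deriv q t) (deriv (deriv q) t) ∧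
      det3 (deriv p t) (deriv (deriv p) t) (deriv (deriv (deriv p)) t)
        = -det3 (deriv q t) (deriv (deriv q) t) (deriv (deriv (deriv q)) t) ∧
      det3 (p t) (deriv (deriv p) t) (deriv (deriv (deriv p)) t)
        = det3 (q t) (deriv (deriv q) t) (deriv (deriv (deriv q)) t) := by
  intro t
  have hq3 : ContDiff ℝ 3 q := hq.of_le (WithTop.coe_le_coe.mpr le_top)
  have hp1 : Differentiable ℝ p := hp.differentiable (by simp)
  have hpq' := dotProduct_deriv_eq_zero hp1 (hq3.of_le (by norm_num)) hpq hode t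
  have hpq'' := dotProduct_deriv_deriv_eq_zero hp1 (hq3.of_le (by norm_num)) hpq hode t
  have hpq''' := dotProduct_deriv_deriv_deriv hp1 hq3 hpq hode t
  rw [hode t, (hasDerivAt_deriv (hq3.of_le (by norm_num)) hode t).deriv,
    (hasDerivAt_deriv_deriv hq3 hode t).deriv, det3_cross_cross_add_cross,
    det3_eq_neg_det3_sq (hpq t) hpq' hpq'' hpq''', neg_neg]
  exact ⟨det3_cross_cross (hpq t) _ _, rfl, det3_cross_add_cross (hpq t) hpq'' _ _⟩

/-- Along integral curves of the Cartan–Engel system `p ⬝ᵥ q = 1`, `p' = q × q'`: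
`Ī = I`, `J̄ = −J` and `K̄ = K`. -/
theorem dancing_pair_invariants (q p : ℝ → Fin 3 → ℝ)
    (hq : ContDiff ℝ (⊤ : ℕ∞) q) (hp : ContDiff ℝ (⊤ : ℕ∞) p)
    (hpq : ∀ t, p t ⬝ᵥ q t = 1)
    (hode : ∀ t, deriv p t = q t ⨯₃ deriv q t)
    (hI : ∀ t, det3 (q t) (deriv q t) (deriv (deriv q) t) ≠ 0)
    (hIbar : ∀ t, det3 (p t) (deriv p t) (deriv (deriv p) t) ≠ 0) :
    ∀ t, det3 (p t) (deriv p t) (deriv (deriv p) t)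
        = det3 (q t) (deriv q t) (deriv (deriv q) t) ∧
      det3 (deriv p t) (deriv (deriv p) t) (deriv (deriv (deriv p)) t)
        = -det3 (deriv q t) (deriv (deriv q) t) (deriv (deriv (deriv q)) t) ∧
      det3 (p t) (deriv (deriv p) t) (deriv (deriv (deriv p)) t)
        = det3 (q t) (deriv (deriv q) t) (deriv (deriv (deriv q)) t) :=
  dancing_pair_invariants_general q p hq hp hpq hode
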